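/- arXiv:1512.03888 — 8 statements merged into one kernel-verified Lean document; each statement's English description precedes it below -/
import Mathlib

section
/- Submodularity of the predimension: for every real number α ≥ 0 and all finite sets s, t of vertices of a simple graph G, δ_α(s ∪ t) + δ_α(s ∩ t) ≤ δ_α(s) + δ_α(t). -/
/-! Every edge inside `s` or inside `t` lies inside `s ∪ t`, and an edge lies inside `s ∩ t`
exactly when it lies inside both; inclusion–exclusion for the edge sets then makes `e`
supermodular, while `|·|` is modular, so `δ_α = |·| - α e` is submodular for `α ≥ 0`. -/

/-- The number of edges of `G` with both endpoints in the finite set `s`. -/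
noncomputable def eCount {V : Type*} (G : SimpleGraph V) (s : Finset V) : ℕ :=
  {e : Sym2 V | e ∈ G.edgeSet ∧ ∀ v ∈ e, v ∈ s}.ncard

/-- The predimension `δ_α(s) = |s| - α·e(s)`. -/
noncomputable def pdim {V : Type*} (G : SimpleGraph V) (α : ℝ) (s : Finset V) : ℝ :=
  (s.card : ℝ) - α * (eCount G s : ℝ)

namespace SimpleGraph

variable {V : Type*} (G : SimpleGraph V)

lemma eCount_eq_ncard_inter_sym2 (s : Finset V) :
    eCount G s = (G.edgeSet ∩ ↑s.sym2).ncard := by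
  simp only [eCount, Set.inter_def, Finset.mem_coe, Finset.mem_sym2_iff]

lemma eCount_add_eCount_le [DecidableEq V] (s t : Finset V) :
    eCount G s + eCount G t ≤ eCount G (s ∪ t) + eCount G (s ∩ t) := by
  simp only [eCount_eq_ncard_inter_sym2]
  have hfin (u : Finset V) : (G.edgeSet ∩ ↑u.sym2).Finite :=
    u.sym2.finite_toSet.subset Set.inter_subset_right
  have hunion : (G.edgeSet ∩ ↑s.sym2) ∪ (G.edgeSet ∩ ↑t.sym2) ⊆ G.edgeSet ∩ ↑(s ∪ t).sym2 :=
    Set.union_subset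
      (Set.inter_subset_inter_right _ (by exact_mod_cast Finset.sym2_mono Finset.subset_union_left))
      (Set.inter_subset_inter_right _ (by exact_mod_cast Finset.sym2_mono Finset.subset_union_right))
  have hinter : (G.edgeSet ∩ ↑s.sym2) ∩ (G.edgeSet ∩ ↑t.sym2) = G.edgeSet ∩ ↑(s ∩ t).sym2 := by
    ext e
    simp only [Set.mem_inter_iff, Finset.mem_coe, Finset.mem_sym2_iff, Finset.mem_inter]
    grind
  calc _ = ((G.edgeSet ∩ ↑s.sym2) ∪ (G.edgeSet ∩ ↑t.sym2)).ncard
        + ((G.edgeSet ∩ ↑s.sym2) ∩ (G.edgeSet ∩ ↑t.sym2)).ncard :=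
        (Set.ncard_union_add_ncard_inter _ _ (hfin s) (hfin t)).symm
    _ ≤ _ := by
        rw [hinter]
        exact Nat.add_le_add_right (Set.ncard_le_ncard hunion (hfin _)) _

end SimpleGraph

/-- Submodularity of the predimension. -/
theorem pdim_submodular {V : Type*} [DecidableEq V] (G : SimpleGraph V)
    (α : ℝ) (hα : 0 ≤ α) (s t : Finset V) :
    pdim G α (s ∪ t) + pdim G α (s ∩ t) ≤ pdim G α s + pdim G α t := by
  have hcard : ((s ∪ t).card : ℝ) + (s ∩ t).card = s.card + t.card := by
    exact_mod_cast Finset.card_union_add_card_inter s t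
  have hedges : (eCount G s : ℝ) + eCount G t ≤ eCount G (s ∪ t) + eCount G (s ∩ t) := by
    exact_mod_cast G.eCount_add_eCount_le s t
  simp only [pdim]
  linarith [mul_le_mul_of_nonneg_left hedges hα]
end

section
/- Additivity of the predimension over free amalgams: let α ≥ 0 be real and let A, B_0, …, B_{n−1} be finite sets of vertices of a simple graph G such that A ⊆ B_i for each i, B_i ∩ B_j = A for all i ≠ j, and no edge of G joins a vertex of B_i \ A to a vertex of B_j \ A for i ≠ j. Then δ_α(B_0 ∪ … ∪ B_{n−1}) − δ_α(A) = Σ_{i<n} (δ_α(B_i) − δ_α(A)). -/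
/-!
The vertex set of the amalgam `⋃ Bᵢ` is a sunflower: the petals `Bᵢ \ A` are pairwise disjoint.
Since no edge joins two different petals, every edge of the amalgam lies inside some `Bᵢ`, so its
edge set is a sunflower too, with core the edges inside `A`. For a sunflower the union exceeds the
core by the sum of the excesses of the `Bᵢ`, and `δ_α` is a linear combination of the two counts.
-/

open Finset

theorem card_biUnion_sub_card_of_inter_eq {ι α : Type*} [DecidableEq α] {s : Finset ι}
    (hs : s.Nonempty) {A : Finset α} {B : ι → Finset α} (hsub : ∀ i ∈ s, A ⊆ B i)
    (hinter : ∀ i ∈ s, ∀ j ∈ s, i ≠ j → B i ∩ B j = A) :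
    (#(s.biUnion B) : ℝ) - #A = ∑ i ∈ s, ((#(B i) : ℝ) - #A) := by
  obtain ⟨i₀, hi₀⟩ := hs
  have hcore : A ⊆ s.biUnion B := (hsub i₀ hi₀).trans (subset_biUnion_of_mem B hi₀)
  have hpetals : s.biUnion B \ A = s.biUnion fun i => B i \ A := by
    ext v
    simp only [mem_sdiff, mem_biUnion]
    tauto
  have hdisj : (s : Set ι).PairwiseDisjoint fun i => B i \ A := by
    intro i hi j hj hij
    rw [Function.onFun, disjoint_left]
    intro v hvi hvj
    rw [mem_sdiff] at hvi hvj
    exact hvi.2 (hinter i hi j hj hij ▸ mem_inter.2 ⟨hvi.1, hvj.1⟩)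
  have hpetal_card : ∀ i ∈ s, (#(B i \ A) : ℝ) = #(B i) - #A := fun i hi =>
    eq_sub_of_add_eq (mod_cast card_sdiff_add_card_eq_card (hsub i hi))
  have hunion : #(s.biUnion B \ A) + #A = #(s.biUnion B) := card_sdiff_add_card_eq_card hcore
  rw [hpetals, card_biUnion hdisj] at hunion
  rw [← hunion, ← sum_congr rfl hpetal_card]
  push_cast
  ring

section EdgesIn

variable {V : Type*} (G : SimpleGraph V)

open scoped Classical in
noncomputable def edgesIn (s : Finset V) : Finset (Sym2 V) := {e ∈ s.sym2 | e ∈ G.edgeSet}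

variable {G}

theorem mem_edgesIn {s : Finset V} {e : Sym2 V} :
    e ∈ edgesIn G s ↔ e ∈ G.edgeSet ∧ ∀ v ∈ e, v ∈ s := by
  classical
  rw [edgesIn, mem_filter, mem_sym2_iff, and_comm]

theorem eCount_eq_card_edgesIn (s : Finset V) : eCount G s = #(edgesIn G s) := by
  rw [eCount, ← Set.ncard_coe_finset]
  congr 1
  ext e
  rw [mem_coe, mem_edgesIn, Set.mem_ofPred_eq]

theorem edgesIn_mono {s t : Finset V} (h : s ⊆ t) : edgesIn G s ⊆ edgesIn G t := fun _ he =>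
  mem_edgesIn.2 ⟨(mem_edgesIn.1 he).1, fun v hv => h ((mem_edgesIn.1 he).2 v hv)⟩

variable [DecidableEq V]

theorem edgesIn_inter (s t : Finset V) : edgesIn G (s ∩ t) = edgesIn G s ∩ edgesIn G t := by
  ext e
  simp only [mem_inter, mem_edgesIn]
  grind

theorem edgesIn_biUnion_of_free {ι : Type*} {s : Finset ι} {A : Finset V} {B : ι → Finset V}
    (hsub : ∀ i ∈ s, A ⊆ B i)
    (hfree : ∀ i ∈ s, ∀ j ∈ s, i ≠ j → ∀ u ∈ B i \ A, ∀ v ∈ B j \ A, ¬ G.Adj u v) :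
    edgesIn G (s.biUnion B) = s.biUnion fun i => edgesIn G (B i) := by
  refine Subset.antisymm ?_
    (biUnion_subset.2 fun i hi => edgesIn_mono (subset_biUnion_of_mem B hi))
  intro e he
  induction e using Sym2.ind with
  | _ u v =>
    obtain ⟨hadj, hmem⟩ := mem_edgesIn.1 he
    obtain ⟨i, hi, hui⟩ := mem_biUnion.1 (hmem u (Sym2.mem_mk_left u v))
    obtain ⟨j, hj, hvj⟩ := mem_biUnion.1 (hmem v (Sym2.mem_mk_right u v))
    have hcommon : ∃ k ∈ s, u ∈ B k ∧ v ∈ B k := by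
      by_cases hij : i = j
      · exact ⟨i, hi, hui, hij ▸ hvj⟩
      by_cases huA : u ∈ A
      · exact ⟨j, hj, hsub j hj huA, hvj⟩
      by_cases hvA : v ∈ A
      · exact ⟨i, hi, hui, hsub i hi hvA⟩
      exact (hfree i hi j hj hij u (mem_sdiff.2 ⟨hui, huA⟩) v (mem_sdiff.2 ⟨hvj, hvA⟩) hadj).elim
    obtain ⟨k, hk, huk, hvk⟩ := hcommon
    refine mem_biUnion.2 ⟨k, hk, mem_edgesIn.2 ⟨hadj, fun w hw => ?_⟩⟩
    rcases Sym2.mem_iff.1 hw with rfl | rfl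
    exacts [huk, hvk]

theorem eCount_biUnion_sub_eCount_of_free {ι : Type*} {s : Finset ι} (hs : s.Nonempty)
    {A : Finset V} {B : ι → Finset V} (hsub : ∀ i ∈ s, A ⊆ B i)
    (hinter : ∀ i ∈ s, ∀ j ∈ s, i ≠ j → B i ∩ B j = A)
    (hfree : ∀ i ∈ s, ∀ j ∈ s, i ≠ j → ∀ u ∈ B i \ A, ∀ v ∈ B j \ A, ¬ G.Adj u v) :
    (eCount G (s.biUnion B) : ℝ) - eCount G A = ∑ i ∈ s, ((eCount G (B i) : ℝ) - eCount G A) := by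
  simp only [eCount_eq_card_edgesIn, edgesIn_biUnion_of_free hsub hfree]
  exact card_biUnion_sub_card_of_inter_eq hs (fun i hi => edgesIn_mono (hsub i hi))
    fun i hi j hj hij => by rw [← edgesIn_inter, hinter i hi j hj hij]

end EdgesIn

theorem pdim_free_amalgam_additive_general {V : Type*} [DecidableEq V] (G : SimpleGraph V)
    (α : ℝ) (n : ℕ) (hn : 0 < n) (A : Finset V) (B : Fin n → Finset V)
    (hsub : ∀ i, A ⊆ B i)
    (hinter : ∀ i j, i ≠ j → B i ∩ B j = A)
    (hfree : ∀ i j, i ≠ j → ∀ u ∈ B i \ A, ∀ v ∈ B j \ A, ¬ G.Adj u v) :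
    pdim G α (Finset.univ.biUnion B) - pdim G α A
      = ∑ i : Fin n, (pdim G α (B i) - pdim G α A) := by
  have huniv : (univ : Finset (Fin n)).Nonempty := univ_nonempty_iff.2 ⟨⟨0, hn⟩⟩
  have hvertices := card_biUnion_sub_card_of_inter_eq huniv (fun i _ => hsub i)
    fun i _ j _ => hinter i j
  have hedges := eCount_biUnion_sub_eCount_of_free (G := G) huniv (fun i _ => hsub i)
    (fun i _ j _ => hinter i j) fun i _ j _ => hfree i j
  calc pdim G α (univ.biUnion B) - pdim G α A
      = ((#(univ.biUnion B) : ℝ) - #A) - α * ((eCount G (univ.biUnion B) : ℝ) - eCount G A) := by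
        unfold pdim; ring
    _ = ∑ i, (pdim G α (B i) - pdim G α A) := by
        rw [hvertices, hedges, mul_sum, ← sum_sub_distrib]
        unfold pdim
        exact sum_congr rfl fun i _ => by ring

/-- Additivity of the predimension over free amalgams. -/
theorem pdim_free_amalgam_additive {V : Type*} [DecidableEq V] (G : SimpleGraph V)
    (α : ℝ) (hα : 0 ≤ α) (n : ℕ) (hn : 0 < n) (A : Finset V) (B : Fin n → Finset V)
    (hsub : ∀ i, A ⊆ B i)
    (hinter : ∀ i j, i ≠ j → B i ∩ B j = A)
    (hfree : ∀ i j, i ≠ j → ∀ u ∈ B i \ A, ∀ v ∈ B j \ A, ¬ G.Adj u v) :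
    pdim G α (Finset.univ.biUnion B) - pdim G α A
      = ∑ i : Fin n, (pdim G α (B i) - pdim G α A) :=
  pdim_free_amalgam_additive_general G α n hn A B hsub hinter hfree
end

section
/- Monotonicity of relative predimension in the base: for every real α ≥ 0 and all finite sets A, B, C of vertices of a simple graph G with B ∩ C ⊆ A, one has δ_α(A ∪ B ∪ C) − δ_α(A ∪ C) ≤ δ_α(A ∪ B) − δ_α(A); that is, the relative predimension of B over A∪C is at most the relative predimension of B over A. -/
/-!
The vertex count is modular and the edge count `e` is supermodular on finite sets (an edge
inside `S ∩ T` lies inside both, an edge inside `S` or `T` lies inside `S ∪ T`), so for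
`α ≥ 0` the predimension is submodular: `δ(S ∪ T) + δ(S ∩ T) ≤ δ(S) + δ(T)`. Apply this to
`S = A ∪ B` and `T = A ∪ C`, whose intersection is `A` because `B ∩ C ⊆ A`.
-/

section Predimension

variable {V : Type*} (G : SimpleGraph V)

def edgesWithin (s : Finset V) : Set (Sym2 V) :=
  {e : Sym2 V | e ∈ G.edgeSet ∧ ∀ v ∈ e, v ∈ s}

theorem eCount_eq_ncard_edgesWithin (s : Finset V) : eCount G s = (edgesWithin G s).ncard :=
  rfl

theorem edgesWithin_subset_sym2 (s : Finset V) : edgesWithin G s ⊆ (s.sym2 : Set (Sym2 V)) :=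
  fun _ he => Finset.mem_sym2_iff.2 he.2

theorem edgesWithin_finite (s : Finset V) : (edgesWithin G s).Finite :=
  s.sym2.finite_toSet.subset (edgesWithin_subset_sym2 G s)

theorem edgesWithin_mono {s t : Finset V} (hst : s ⊆ t) : edgesWithin G s ⊆ edgesWithin G t :=
  fun _ he => ⟨he.1, fun v hv => hst (he.2 v hv)⟩

theorem edgesWithin_inter [DecidableEq V] (s t : Finset V) :
    edgesWithin G (s ∩ t) = edgesWithin G s ∩ edgesWithin G t := by
  ext e
  simp only [edgesWithin, Set.mem_inter_iff, Set.mem_ofPred_eq, Finset.mem_inter]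
  grind

theorem eCount_add_eCount_le [DecidableEq V] (s t : Finset V) :
    eCount G s + eCount G t ≤ eCount G (s ∪ t) + eCount G (s ∩ t) := by
  have hunion : edgesWithin G s ∪ edgesWithin G t ⊆ edgesWithin G (s ∪ t) :=
    Set.union_subset (edgesWithin_mono G Finset.subset_union_left)
      (edgesWithin_mono G Finset.subset_union_right)
  simp only [eCount_eq_ncard_edgesWithin, edgesWithin_inter,
    ← Set.ncard_union_add_ncard_inter _ _ (edgesWithin_finite G s) (edgesWithin_finite G t)]
  exact Nat.add_le_add_right (Set.ncard_le_ncard hunion (edgesWithin_finite G _)) _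

theorem pdim_union_add_pdim_inter_le [DecidableEq V] {α : ℝ} (hα : 0 ≤ α) (s t : Finset V) :
    pdim G α (s ∪ t) + pdim G α (s ∩ t) ≤ pdim G α s + pdim G α t := by
  have hcard : ((s ∪ t).card : ℝ) + (s ∩ t).card = s.card + t.card := by
    exact_mod_cast Finset.card_union_add_card_inter s t
  have hedge : (eCount G s : ℝ) + eCount G t ≤ eCount G (s ∪ t) + eCount G (s ∩ t) := by
    exact_mod_cast eCount_add_eCount_le G s t
  simp only [pdim]
  linarith [mul_le_mul_of_nonneg_left hedge hα]

end Predimension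

/-- Monotonicity of the relative predimension in the base. -/
theorem pdim_rel_mono_base {V : Type*} [DecidableEq V] (G : SimpleGraph V)
    (α : ℝ) (hα : 0 ≤ α) (A B C : Finset V) (h : B ∩ C ⊆ A) :
    pdim G α (A ∪ B ∪ C) - pdim G α (A ∪ C) ≤ pdim G α (A ∪ B) - pdim G α A := by
  have hinter : (A ∪ B) ∩ (A ∪ C) = A := by
    rw [← Finset.union_inter_distrib_left, Finset.union_eq_left.2 h]
  have hunion : (A ∪ B) ∪ (A ∪ C) = A ∪ B ∪ C := by
    rw [← Finset.union_union_distrib_left, Finset.union_assoc]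
  have hsub := pdim_union_add_pdim_inter_le G hα (A ∪ B) (A ∪ C)
  rw [hinter, hunion] at hsub
  linarith
end

section
/- The class of hereditarily positive finite graphs is closed under free amalgamation: let A, B, C be finite sets of vertices of a simple graph G with B ∩ C = A and with no edge of G joining a vertex of B \ A to a vertex of C \ A. Suppose that δ_r(B') > 0 for every nonempty B' ⊆ B, that δ_r(C') > 0 for every nonempty C' ⊆ C, and that A ≼ B and A ≼ C. Then δ_r(D') > 0 for every nonempty D' ⊆ B ∪ C. -/
/-- The rational predimension `δ_r(s) = |s| - r·e(s)`. -/
noncomputable def pdimQ {V : Type*} (G : SimpleGraph V) (r : ℚ) (s : Finset V) : ℚ :=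
  (s.card : ℚ) - r * (eCount G s : ℚ)

/-- `A ≼ B`: `A ⊆ B` and `δ_r(B₀) > δ_r(A)` for every `B₀` with `A ⊊ B₀ ⊆ B`. -/
def Strong {V : Type*} (G : SimpleGraph V) (r : ℚ) (A B : Finset V) : Prop :=
  A ⊆ B ∧ ∀ B₀ : Finset V, A ⊂ B₀ → B₀ ⊆ B → pdimQ G r A < pdimQ G r B₀

namespace HeredPosAux

open Set

variable {V : Type*} [DecidableEq V] (G : SimpleGraph V)

/-- The set of edges with both endpoints in `s`. -/
def ES (s : Finset V) : Set (Sym2 V) := {e | e ∈ G.edgeSet ∧ ∀ v ∈ e, v ∈ s}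

lemma eCount_eq (s : Finset V) : eCount G s = (ES G s).ncard := rfl

lemma ES_finite (s : Finset V) : (ES G s).Finite := by
  have h : ES G s ⊆ (fun p : V × V => s(p.1, p.2)) '' (↑s ×ˢ ↑s) := by
    rintro e ⟨he, hs⟩
    induction e using Sym2.ind with
    | _ u v =>
      exact ⟨(u, v), ⟨hs u (by simp), hs v (by simp)⟩, rfl⟩
  exact ((s.finite_toSet.prod s.finite_toSet).image _).subset h

lemma ES_mono {s t : Finset V} (h : s ⊆ t) : ES G s ⊆ ES G t :=
  fun e he => ⟨he.1, fun v hv => h (he.2 v hv)⟩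

lemma ES_inter (s t : Finset V) : ES G (s ∩ t) = ES G s ∩ ES G t := by
  ext e
  simp only [ES, mem_setOf_eq, Set.mem_inter_iff, Finset.mem_inter]
  constructor
  · rintro ⟨he, h⟩
    exact ⟨⟨he, fun v hv => (h v hv).1⟩, he, fun v hv => (h v hv).2⟩
  · rintro ⟨⟨he, h1⟩, ⟨_, h2⟩⟩
    exact ⟨he, fun v hv => ⟨h1 v hv, h2 v hv⟩⟩

lemma eCount_supermod (s t : Finset V) :
    eCount G s + eCount G t ≤ eCount G (s ∪ t) + eCount G (s ∩ t) := by
  have h1 : ES G s ∪ ES G t ⊆ ES G (s ∪ t) :=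
    union_subset (ES_mono G Finset.subset_union_left) (ES_mono G Finset.subset_union_right)
  calc eCount G s + eCount G t
      = (ES G s ∪ ES G t).ncard + (ES G s ∩ ES G t).ncard :=
        (Set.ncard_union_add_ncard_inter _ _ (ES_finite G s) (ES_finite G t)).symm
    _ ≤ eCount G (s ∪ t) + eCount G (s ∩ t) := by
        rw [eCount_eq, eCount_eq, ES_inter]
        exact add_le_add (Set.ncard_le_ncard h1 (ES_finite G _)) le_rfl

lemma eCount_submod {s t : Finset V} (h : ES G (s ∪ t) ⊆ ES G s ∪ ES G t) :
    eCount G (s ∪ t) + eCount G (s ∩ t) ≤ eCount G s + eCount G t := by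
  calc eCount G (s ∪ t) + eCount G (s ∩ t)
      ≤ (ES G s ∪ ES G t).ncard + (ES G s ∩ ES G t).ncard := by
        rw [eCount_eq, eCount_eq, ES_inter]
        exact add_le_add
          (Set.ncard_le_ncard h ((ES_finite G s).union (ES_finite G t))) le_rfl
    _ = eCount G s + eCount G t :=
        Set.ncard_union_add_ncard_inter _ _ (ES_finite G s) (ES_finite G t)

lemma pdimQ_submod {r : ℚ} (hr : 0 ≤ r) (s t : Finset V) :
    pdimQ G r (s ∪ t) + pdimQ G r (s ∩ t) ≤ pdimQ G r s + pdimQ G r t := by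
  have hcard : ((s ∪ t).card : ℚ) + ((s ∩ t).card : ℚ) = (s.card : ℚ) + (t.card : ℚ) := by
    exact_mod_cast Finset.card_union_add_card_inter s t
  have he : (eCount G s : ℚ) + (eCount G t : ℚ)
      ≤ (eCount G (s ∪ t) : ℚ) + (eCount G (s ∩ t) : ℚ) := by
    exact_mod_cast eCount_supermod G s t
  have := mul_le_mul_of_nonneg_left he hr
  simp only [pdimQ]
  nlinarith [this]

lemma pdimQ_supermod {r : ℚ} (hr : 0 ≤ r) {s t : Finset V}
    (h : ES G (s ∪ t) ⊆ ES G s ∪ ES G t) :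
    pdimQ G r s + pdimQ G r t ≤ pdimQ G r (s ∪ t) + pdimQ G r (s ∩ t) := by
  have hcard : ((s ∪ t).card : ℚ) + ((s ∩ t).card : ℚ) = (s.card : ℚ) + (t.card : ℚ) := by
    exact_mod_cast Finset.card_union_add_card_inter s t
  have he : (eCount G (s ∪ t) : ℚ) + (eCount G (s ∩ t) : ℚ)
      ≤ (eCount G s : ℚ) + (eCount G t : ℚ) := by
    exact_mod_cast eCount_submod G h
  have := mul_le_mul_of_nonneg_left he hr
  simp only [pdimQ]
  nlinarith [this]

end HeredPosAux

open HeredPosAux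

/-- The class of hereditarily positive finite graphs is closed under free
amalgamation. -/
theorem hered_pos_free_amalgam {V : Type*} [DecidableEq V] (G : SimpleGraph V) (r : ℚ)
    (hr0 : 0 < r) (hr1 : r < 1) (A B C : Finset V)
    (hBC : B ∩ C = A)
    (hfree : ∀ u ∈ B \ A, ∀ v ∈ C \ A, ¬ G.Adj u v)
    (hB : ∀ B' ⊆ B, B'.Nonempty → 0 < pdimQ G r B')
    (hC : ∀ C' ⊆ C, C'.Nonempty → 0 < pdimQ G r C')
    (hAB : Strong G r A B) (hAC : Strong G r A C) :
    ∀ D' ⊆ B ∪ C, D'.Nonempty → 0 < pdimQ G r D' := by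
  have hAsubB : A ⊆ B := hAB.1
  have hAsubC : A ⊆ C := hAC.1
  intro D' hD' hne
  set X := D' ∩ B with hXdef
  set Y := D' ∩ C with hYdef
  have hXB : X ⊆ B := Finset.inter_subset_right
  have hYC : Y ⊆ C := Finset.inter_subset_right
  have hDXY : D' = X ∪ Y := by
    apply Finset.Subset.antisymm
    · intro v hv
      rcases Finset.mem_union.mp (hD' hv) with h | h
      · exact Finset.mem_union_left _ (Finset.mem_inter.mpr ⟨hv, h⟩)
      · exact Finset.mem_union_right _ (Finset.mem_inter.mpr ⟨hv, h⟩)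
    · exact Finset.union_subset Finset.inter_subset_left Finset.inter_subset_left
  -- the freeness condition in terms of edge sets
  have hfreeES : ES G (X ∪ Y) ⊆ ES G X ∪ ES G Y := by
    rintro e ⟨he, hv⟩
    induction e using Sym2.ind with
    | _ u v =>
      have hadj : G.Adj u v := he
      have hu : u ∈ X ∪ Y := hv u (by simp)
      have hvv : v ∈ X ∪ Y := hv v (by simp)
      have hmem : ∀ w, w ∈ s(u, v) → (w = u ∨ w = v) := by
        intro w hw; exact Sym2.mem_iff.mp hw
      -- a vertex of X not in Y is in B \ A; similar for Y
      have hXnA : ∀ w ∈ X, w ∉ Y → w ∈ B \ A := by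
        intro w hw hwY
        refine Finset.mem_sdiff.mpr ⟨hXB hw, fun hwA => hwY ?_⟩
        exact Finset.mem_inter.mpr ⟨(Finset.mem_inter.mp hw).1, hAsubC hwA⟩
      have hYnA : ∀ w ∈ Y, w ∉ X → w ∈ C \ A := by
        intro w hw hwX
        refine Finset.mem_sdiff.mpr ⟨hYC hw, fun hwA => hwX ?_⟩
        exact Finset.mem_inter.mpr ⟨(Finset.mem_inter.mp hw).1, hAsubB hwA⟩
      by_cases huX : u ∈ X
      · by_cases hvX : v ∈ X
        · exact Or.inl ⟨he, fun w hw => by rcases hmem w hw with rfl | rfl <;> assumption⟩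
        · -- v ∈ Y \ X
          have hvY : v ∈ Y := (Finset.mem_union.mp hvv).resolve_left hvX
          by_cases huY : u ∈ Y
          · exact Or.inr ⟨he, fun w hw => by rcases hmem w hw with rfl | rfl <;> assumption⟩
          · exact absurd hadj (hfree u (hXnA u huX huY) v (hYnA v hvY hvX))
      · have huY : u ∈ Y := (Finset.mem_union.mp hu).resolve_left huX
        by_cases hvY : v ∈ Y
        · exact Or.inr ⟨he, fun w hw => by rcases hmem w hw with rfl | rfl <;> assumption⟩
        · have hvX : v ∈ X := (Finset.mem_union.mp hvv).resolve_right hvY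
          exact absurd hadj.symm (hfree v (hXnA v hvX hvY) u (hYnA u huY huX))
  by_cases hXe : X = ∅
  · have : D' = Y := by rw [hDXY, hXe, Finset.empty_union]
    exact this ▸ hC Y hYC (this ▸ hne)
  · have hXne : X.Nonempty := Finset.nonempty_iff_ne_empty.mpr hXe
    -- key: δ(Y) ≥ δ(A ∩ Y)
    have hkey : pdimQ G r (A ∩ Y) ≤ pdimQ G r Y := by
      have hsub := pdimQ_submod G hr0.le A Y
      have hAUY : pdimQ G r A ≤ pdimQ G r (A ∪ Y) := by
        by_cases hEq : A ∪ Y = A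
        · rw [hEq]
        · refine le_of_lt (hAC.2 (A ∪ Y) ?_ (Finset.union_subset hAsubC hYC))
          exact Finset.ssubset_iff_subset_ne.mpr ⟨Finset.subset_union_left, Ne.symm hEq⟩
      linarith
    -- δ(X) + δ(Y) ≤ δ(X ∪ Y) + δ(X ∩ Y)
    have hsup := pdimQ_supermod G hr0.le hfreeES
    have hXY_inter : X ∩ Y = A ∩ Y := by
      ext w
      simp only [hXdef, hYdef, ← hBC, Finset.mem_inter]
      tauto
    have hXpos := hB X hXB hXne
    rw [hDXY]
    rw [hXY_inter] at hsup
    linarith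
end

section
/- Full amalgamation for the relation ≼: let A, B, C be finite sets of vertices of a simple graph G with B ∩ C = A, A ⊆ C, and with no edge of G joining a vertex of B \ A to a vertex of C \ A. If A ≼ B, then C ≼ B ∪ C. -/
open Classical in
/-- The finset of edges of `G` with both endpoints in `s`. -/
noncomputable def eFin {V : Type*} [DecidableEq V] (G : SimpleGraph V) (s : Finset V) :
    Finset (Sym2 V) :=
  s.sym2.filter (· ∈ G.edgeSet)

lemma eCount_eq_eFin {V : Type*} [DecidableEq V] (G : SimpleGraph V) (s : Finset V) :
    eCount G s = (eFin G s).card := by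
  classical
  rw [eCount, ← Set.ncard_coe_finset]
  congr 1
  ext e
  simp only [Finset.coe_filter, eFin, Set.mem_setOf_eq, Finset.mem_sym2_iff, Finset.mem_coe]
  tauto

lemma mem_eFin {V : Type*} [DecidableEq V] {G : SimpleGraph V} {s : Finset V} {e : Sym2 V} :
    e ∈ eFin G s ↔ e ∈ G.edgeSet ∧ ∀ v ∈ e, v ∈ s := by
  classical
  simp only [eFin, Finset.mem_filter, Finset.mem_sym2_iff]
  tauto

lemma eFin_union {V : Type*} [DecidableEq V] {G : SimpleGraph V} {A B₀ C : Finset V}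
    (hBC : B₀ ∩ C = A)
    (hfree : ∀ u ∈ B₀, u ∉ A → ∀ v ∈ C, v ∉ A → ¬ G.Adj u v) :
    eFin G (B₀ ∪ C) = eFin G B₀ ∪ eFin G C := by
  ext e
  simp only [Finset.mem_union, mem_eFin]
  constructor
  · rintro ⟨he, hsub⟩
    induction e with
    | h u v =>
      have hu := hsub u (by simp)
      have hv := hsub v (by simp)
      have hadj : G.Adj u v := he
      have key : (u ∈ B₀ ∧ v ∈ B₀) ∨ (u ∈ C ∧ v ∈ C) := by
        rcases hu with hu | hu <;> rcases hv with hv | hv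
        · exact Or.inl ⟨hu, hv⟩
        · by_cases huC : u ∈ C
          · exact Or.inr ⟨huC, hv⟩
          · by_cases hvB : v ∈ B₀
            · exact Or.inl ⟨hu, hvB⟩
            · exfalso
              have huA : u ∉ A := fun h => huC ((hBC ▸ h : u ∈ B₀ ∩ C) |> Finset.mem_inter.1).2
              have hvA : v ∉ A := fun h => hvB ((hBC ▸ h : v ∈ B₀ ∩ C) |> Finset.mem_inter.1).1
              exact hfree u hu huA v hv hvA hadj
        · by_cases hvC : v ∈ C
          · exact Or.inr ⟨hu, hvC⟩
          · by_cases huB : u ∈ B₀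
            · exact Or.inl ⟨huB, hv⟩
            · exfalso
              have hvA : v ∉ A := fun h => hvC ((hBC ▸ h : v ∈ B₀ ∩ C) |> Finset.mem_inter.1).2
              have huA : u ∉ A := fun h => huB ((hBC ▸ h : u ∈ B₀ ∩ C) |> Finset.mem_inter.1).1
              exact hfree v hv hvA u hu huA hadj.symm
        · exact Or.inr ⟨hu, hv⟩
      rcases key with ⟨h1, h2⟩ | ⟨h1, h2⟩
      · refine Or.inl ⟨he, ?_⟩
        intro w hw
        rcases Sym2.mem_iff.1 hw with rfl | rfl <;> assumption
      · refine Or.inr ⟨he, ?_⟩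
        intro w hw
        rcases Sym2.mem_iff.1 hw with rfl | rfl <;> assumption
  · rintro (⟨he, hsub⟩ | ⟨he, hsub⟩)
    · exact ⟨he, fun v hv => Or.inl (hsub v hv)⟩
    · exact ⟨he, fun v hv => Or.inr (hsub v hv)⟩

lemma eFin_inter {V : Type*} [DecidableEq V] {G : SimpleGraph V} {B₀ C A : Finset V}
    (hBC : B₀ ∩ C = A) :
    eFin G B₀ ∩ eFin G C = eFin G A := by
  ext e
  simp only [Finset.mem_inter, mem_eFin]
  constructor
  · rintro ⟨⟨he, h1⟩, ⟨_, h2⟩⟩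
    exact ⟨he, fun v hv => hBC ▸ Finset.mem_inter.2 ⟨h1 v hv, h2 v hv⟩⟩
  · rintro ⟨he, h⟩
    refine ⟨⟨he, fun v hv => ?_⟩, ⟨he, fun v hv => ?_⟩⟩
    · exact (Finset.mem_inter.1 (hBC ▸ h v hv)).1
    · exact (Finset.mem_inter.1 (hBC ▸ h v hv)).2

lemma pdimQ_add {V : Type*} [DecidableEq V] (G : SimpleGraph V) (r : ℚ) {A B₀ C : Finset V}
    (hBC : B₀ ∩ C = A)
    (hfree : ∀ u ∈ B₀, u ∉ A → ∀ v ∈ C, v ∉ A → ¬ G.Adj u v) :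
    pdimQ G r (B₀ ∪ C) + pdimQ G r A = pdimQ G r B₀ + pdimQ G r C := by
  have hcard : (B₀ ∪ C).card + A.card = B₀.card + C.card := by
    rw [← hBC]; exact Finset.card_union_add_card_inter B₀ C
  have hedge : (eFin G (B₀ ∪ C)).card + (eFin G A).card
      = (eFin G B₀).card + (eFin G C).card := by
    rw [eFin_union hBC hfree, ← eFin_inter (G := G) hBC]
    exact Finset.card_union_add_card_inter _ _
  simp only [pdimQ, eCount_eq_eFin]
  have h1 : ((B₀ ∪ C).card : ℚ) + A.card = B₀.card + C.card := by exact_mod_cast hcard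
  have h2 : ((eFin G (B₀ ∪ C)).card : ℚ) + (eFin G A).card
      = (eFin G B₀).card + (eFin G C).card := by exact_mod_cast hedge
  have h3 : r * (((eFin G (B₀ ∪ C)).card : ℚ) + (eFin G A).card)
      = r * (((eFin G B₀).card : ℚ) + (eFin G C).card) := by rw [h2]
  ring_nf at h3 ⊢
  linarith

/-- Full amalgamation for the relation `≼`. -/
theorem strong_full_amalgam {V : Type*} [DecidableEq V] (G : SimpleGraph V) (r : ℚ)
    (hr0 : 0 < r) (hr1 : r < 1) (A B C : Finset V)
    (hBC : B ∩ C = A) (hAC : A ⊆ C)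
    (hfree : ∀ u ∈ B \ A, ∀ v ∈ C \ A, ¬ G.Adj u v)
    (hAB : Strong G r A B) :
    Strong G r C (B ∪ C) := by
  obtain ⟨hABsub, hABstr⟩ := hAB
  refine ⟨Finset.subset_union_right, fun D hCD hDsub => ?_⟩
  set B₀ := D ∩ B with hB₀
  have hAD : A ⊆ D := hAC.trans hCD.subset
  have hAB₀ : A ⊆ B₀ := fun x hx => Finset.mem_inter.2 ⟨hAD hx, hABsub hx⟩
  have hB₀C : B₀ ∩ C = A := by
    rw [hB₀, Finset.inter_assoc, hBC]
    exact Finset.inter_eq_right.2 hAD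
  have hDeq : D = B₀ ∪ C := by
    apply Finset.Subset.antisymm
    · intro x hx
      rcases Finset.mem_union.1 (hDsub hx) with h | h
      · exact Finset.mem_union.2 (Or.inl (Finset.mem_inter.2 ⟨hx, h⟩))
      · exact Finset.mem_union.2 (Or.inr h)
    · exact Finset.union_subset (Finset.inter_subset_left) hCD.subset
  have hAssB₀ : A ⊂ B₀ := by
    refine Finset.ssubset_iff_subset_ne.2 ⟨hAB₀, fun h => ?_⟩
    have : D = C := by
      rw [hDeq, ← h, Finset.union_eq_right.2 hAC]
    exact hCD.ne (this.symm)
  have hfree' : ∀ u ∈ B₀, u ∉ A → ∀ v ∈ C, v ∉ A → ¬ G.Adj u v := by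
    intro u hu huA v hv hvA
    exact hfree u (Finset.mem_sdiff.2 ⟨(Finset.mem_inter.1 hu).2, huA⟩)
      v (Finset.mem_sdiff.2 ⟨hv, hvA⟩)
  have hkey := pdimQ_add G r hB₀C hfree'
  have hlt : pdimQ G r A < pdimQ G r B₀ :=
    hABstr B₀ hAssB₀ Finset.inter_subset_right
  rw [hDeq]
  linarith
end

section
/- Intermediate sets of a 0-extension have no predimension drop: if (X,Z) is a 0-extension of finite sets of vertices of a simple graph G, then δ_r(Y) ≥ δ_r(X) for every Y with X ⊆ Y ⊆ Z; in particular there is no Y with X ⊆ Y ⊆ Z and δ_r(Y) − δ_r(X) < 0. -/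
/-- `(X,Z)` is a minimal pair: `X ⊆ Z`, `X ⋠ Z`, but `X ≼ Z₀` for every
`Z₀` with `X ⊆ Z₀ ⊊ Z`. -/
def MinPair {V : Type*} (G : SimpleGraph V) (r : ℚ) (X Z : Finset V) : Prop :=
  X ⊆ Z ∧ ¬ Strong G r X Z ∧ ∀ Z₀ : Finset V, X ⊆ Z₀ → Z₀ ⊂ Z → Strong G r X Z₀

/-- `(X,Z)` is a `0`-extension: there is a chain `X = X₀ ⊆ … ⊆ X_k = Z` in
which each `(X_i, X_{i+1})` is a minimal pair with `δ_r(X_{i+1}) = δ_r(X_i)`. -/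
def ZeroExt {V : Type*} (G : SimpleGraph V) (r : ℚ) (X Z : Finset V) : Prop :=
  ∃ (k : ℕ) (f : ℕ → Finset V), f 0 = X ∧ f k = Z ∧
    ∀ i < k, MinPair G r (f i) (f (i + 1)) ∧ pdimQ G r (f (i + 1)) = pdimQ G r (f i)

/-
Say `(A, B)` has no drop if `δ(A) ≤ δ(Y)` whenever `A ⊆ Y ⊆ B`. Predimension is submodular,
since `e` is supermodular and `r ≥ 0`, so no drop is transitive along `X ⊆ A ⊆ B`: for
`X ⊆ Y ⊆ B`, `δ(X) + δ(A) ≤ δ(Y ∩ A) + δ(Y ∪ A) ≤ δ(Y) + δ(A)`. Each step `(A, B)` of a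
`0`-extension has no drop: proper intermediate sets are strong over `A`, and `δ(B) = δ(A)`.
-/

open Finset

section
variable {V : Type*} (G : SimpleGraph V) (r : ℚ)

theorem eCount_eq_card_filter_sym2 [DecidableEq V] [DecidableRel G.Adj] (s : Finset V) :
    eCount G s = #{e ∈ s.sym2 | e ∈ G.edgeSet} := by
  rw [eCount, ← Set.ncard_coe_finset]
  congr 1
  ext e
  simp [mem_sym2_iff, and_comm]

theorem eCount_add_le_eCount_union_add_eCount_inter [DecidableEq V] (A B : Finset V) :
    eCount G A + eCount G B ≤ eCount G (A ∪ B) + eCount G (A ∩ B) := by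
  classical
  simp only [eCount_eq_card_filter_sym2]
  rw [← card_union_add_card_inter]
  gcongr
  · exact union_subset (filter_subset_filter _ (sym2_mono subset_union_left))
      (filter_subset_filter _ (sym2_mono subset_union_right))
  · intro e he
    simp only [mem_inter, mem_filter, mem_sym2_iff] at he ⊢
    exact ⟨fun v hv => ⟨he.1.1 v hv, he.2.1 v hv⟩, he.1.2⟩

variable {r}

theorem pdimQ_union_add_pdimQ_inter_le [DecidableEq V] (hr : 0 ≤ r) (A B : Finset V) :
    pdimQ G r (A ∪ B) + pdimQ G r (A ∩ B) ≤ pdimQ G r A + pdimQ G r B := by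
  have hcard : ((A ∪ B).card : ℚ) + (A ∩ B).card = A.card + B.card := by
    exact_mod_cast card_union_add_card_inter A B
  have hedge : (eCount G A : ℚ) + eCount G B ≤ eCount G (A ∪ B) + eCount G (A ∩ B) := by
    exact_mod_cast eCount_add_le_eCount_union_add_eCount_inter G A B
  unfold pdimQ
  nlinarith

variable (r) in
def NoDrop (A B : Finset V) : Prop :=
  ∀ Y : Finset V, A ⊆ Y → Y ⊆ B → pdimQ G r A ≤ pdimQ G r Y

theorem NoDrop.refl (A : Finset V) : NoDrop G r A A := by
  intro Y hAY hYA
  rw [Subset.antisymm hAY hYA]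

theorem NoDrop.trans (hr : 0 ≤ r) {X A B : Finset V} (hXA : X ⊆ A) (hAB : A ⊆ B)
    (hXA' : NoDrop G r X A) (hAB' : NoDrop G r A B) : NoDrop G r X B := by
  classical
  intro Y hXY hYB
  have hinter : pdimQ G r X ≤ pdimQ G r (Y ∩ A) :=
    hXA' _ (subset_inter hXY hXA) inter_subset_right
  have hunion : pdimQ G r A ≤ pdimQ G r (Y ∪ A) :=
    hAB' _ subset_union_right (union_subset hYB hAB)
  linarith [pdimQ_union_add_pdimQ_inter_le G hr Y A]

theorem MinPair.noDrop {A B : Finset V} (hAB : MinPair G r A B)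
    (heq : pdimQ G r B = pdimQ G r A) : NoDrop G r A B := by
  intro Y hAY hYB
  obtain rfl | hYB := hYB.eq_or_ssubset
  · exact heq.ge
  obtain rfl | hAY := hAY.eq_or_ssubset
  · exact le_rfl
  exact ((hAB.2.2 Y hAY.subset hYB).2 Y hAY subset_rfl).le

theorem ZeroExt.noDrop (hr : 0 ≤ r) {X Z : Finset V} (h : ZeroExt G r X Z) :
    NoDrop G r X Z := by
  obtain ⟨k, f, rfl, rfl, hchain⟩ := h
  suffices ∀ i ≤ k, f 0 ⊆ f i ∧ NoDrop G r (f 0) (f i) from (this k le_rfl).2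
  intro i hi
  induction i with
  | zero => exact ⟨subset_rfl, NoDrop.refl G _⟩
  | succ i ih =>
    obtain ⟨hsub, hnd⟩ := ih (by omega)
    obtain ⟨hmin, heq⟩ := hchain i (by omega)
    exact ⟨hsub.trans hmin.1, hnd.trans G hr hsub hmin.1 (hmin.noDrop G heq)⟩

end

theorem zeroExt_no_drop_general {V : Type*} (G : SimpleGraph V) (r : ℚ)
    (hr0 : 0 < r) (X Z : Finset V) (h : ZeroExt G r X Z) :
    (∀ Y : Finset V, X ⊆ Y → Y ⊆ Z → pdimQ G r X ≤ pdimQ G r Y) ∧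
      ¬ ∃ Y : Finset V, X ⊆ Y ∧ Y ⊆ Z ∧ pdimQ G r Y - pdimQ G r X < 0 := by
  have hnd : NoDrop G r X Z := h.noDrop G hr0.le
  refine ⟨hnd, ?_⟩
  rintro ⟨Y, hXY, hYZ, hlt⟩
  linarith [hnd Y hXY hYZ]

/-- Intermediate sets of a `0`-extension have no predimension drop. -/
theorem zeroExt_no_drop {V : Type*} (G : SimpleGraph V) (r : ℚ)
    (hr0 : 0 < r) (hr1 : r < 1) (X Z : Finset V) (h : ZeroExt G r X Z) :
    (∀ Y : Finset V, X ⊆ Y → Y ⊆ Z → pdimQ G r X ≤ pdimQ G r Y) ∧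
      ¬ ∃ Y : Finset V, X ⊆ Y ∧ Y ⊆ Z ∧ pdimQ G r Y - pdimQ G r X < 0 :=
  zeroExt_no_drop_general G r hr0 X Z h
end

section
/- Full amalgamation for the relation ≼*: let A, B, C be admissible finite sets of vertices with A = B ∩ C, A ≼* B, and A ⊆ C, and let D = B ⊕_A C be the free amalgam. Then C ≼* D. -/
/-- A `0`-extension `(X,Z)` is proper if no proper subset of `X` gives a
`0`-extension of `Z`, and `Z \ X` cannot be split into two nonempty pieces with
no `G`-edge between them. -/
def ProperZeroExt {V : Type*} [DecidableEq V] (G : SimpleGraph V) (r : ℚ) (X Z : Finset V) : Prop :=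
  ZeroExt G r X Z ∧
    (∀ X₀ : Finset V, X₀ ⊂ X → ¬ ZeroExt G r X₀ Z) ∧
    ¬ ∃ Z₀ Z₁ : Finset V, Z₀.Nonempty ∧ Z₁.Nonempty ∧ Disjoint Z₀ Z₁ ∧
        Z₀ ∪ Z₁ = Z \ X ∧ ∀ u ∈ Z₀, ∀ v ∈ Z₁, ¬ G.Adj u v

/-- A set of vertices is `S`-homogeneous if all of its elements are `S`-equivalent. -/
def SHom {V : Type*} (S : V → V → Prop) (X : Finset V) : Prop :=
  ∀ u ∈ X, ∀ v ∈ X, S u v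

/-- `μ(X,Y) = 2(δ_r(X) + δ_r(Y))/γ` where `γ = 1/q`. -/
noncomputable def muFn {V : Type*} (G : SimpleGraph V) (r : ℚ) (q : ℕ)
    (X Y : Finset V) : ℚ :=
  2 * (pdimQ G r X + pdimQ G r Y) / ((1 : ℚ) / (q : ℚ))

/-- `ν(X)`: the maximum of `μ(X₀, X₁)` over all partitions `X = X₀ ⊔ X₁`. -/
noncomputable def nuFn {V : Type*} [DecidableEq V] (G : SimpleGraph V) (r : ℚ) (q : ℕ)
    (X : Finset V) : ℚ :=
  X.powerset.sup' ⟨∅, Finset.empty_mem_powerset X⟩ (fun X₀ => muFn G r q X₀ (X \ X₀))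

/-- Two subsets are isomorphic over `X` if there is a bijection between them,
fixing `X` pointwise, which is an isomorphism of induced subgraphs. -/
def IsoOver {V : Type*} (G : SimpleGraph V) (X Z₁ Z₂ : Finset V) : Prop :=
  ∃ f : V → V, Set.BijOn f (Z₁ : Set V) (Z₂ : Set V) ∧ (∀ x ∈ X, f x = x) ∧
    ∀ u ∈ Z₁, ∀ v ∈ Z₁, (G.Adj u v ↔ G.Adj (f u) (f v))

/-- A finite set `A` of vertices is admissible. -/
def Admissible {V : Type*} [DecidableEq V] (G : SimpleGraph V) (S : V → V → Prop)
    (r : ℚ) (q N : ℕ) (A : Finset V) : Prop :=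
  (∀ A' ⊆ A, A'.Nonempty → 0 < pdimQ G r A') ∧
  (∀ v ∈ A, {u : V | u ∈ A ∧ S u v}.ncard < N) ∧
  (∀ X ⊆ A, ¬ SHom S X →
    ∀ (k : ℕ) (Z : Fin k → Finset V),
      (∀ i, Z i ⊆ A) →
      (∀ i, ProperZeroExt G r X (Z i)) →
      (∀ i j, i ≠ j → Z i ∩ Z j = X) →
      (∀ i j, IsoOver G X (Z i) (Z j)) →
      (k : ℚ) ≤ nuFn G r q X)

/-- `A ≼* B`: every `S`-homogeneous subset of `B` is contained in `A` or in
`B \ A`, and `A ≼ B`. -/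
def StrongStar {V : Type*} [DecidableEq V] (G : SimpleGraph V) (S : V → V → Prop)
    (r : ℚ) (A B : Finset V) : Prop :=
  (∀ X ⊆ B, SHom S X → X ⊆ A ∨ X ⊆ B \ A) ∧ Strong G r A B

lemma eSet_finite {V : Type*} (G : SimpleGraph V) (s : Finset V) :
    {e : Sym2 V | e ∈ G.edgeSet ∧ ∀ v ∈ e, v ∈ s}.Finite :=
  Set.Finite.subset s.sym2.finite_toSet (fun e he => Finset.mem_sym2_iff.mpr he.2)

lemma pdim_amalgam {V : Type*} [DecidableEq V] (G : SimpleGraph V) (r : ℚ)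
    (A C Y : Finset V) (hAC : A ⊆ C) (hYC : Disjoint Y C)
    (hfree : ∀ u ∈ Y, ∀ v ∈ C \ A, ¬ G.Adj u v) :
    pdimQ G r (C ∪ Y) + pdimQ G r A = pdimQ G r C + pdimQ G r (A ∪ Y) := by
  have hYA : Disjoint Y A := hYC.mono_right hAC
  -- cardinalities
  have hc : ((C ∪ Y).card : ℚ) + A.card = C.card + (A ∪ Y).card := by
    have h1 : (C ∪ Y).card = C.card + Y.card := Finset.card_union_of_disjoint hYC.symm
    have h2 : (A ∪ Y).card = A.card + Y.card := Finset.card_union_of_disjoint hYA.symm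
    push_cast [h1, h2]; ring
  -- edge sets
  set Es : Finset V → Set (Sym2 V) :=
    fun s => {e : Sym2 V | e ∈ G.edgeSet ∧ ∀ v ∈ e, v ∈ s} with hEs
  have hUnion : Es C ∪ Es (A ∪ Y) = Es (C ∪ Y) := by
    ext e
    induction e using Sym2.ind with
    | _ u v =>
      simp only [hEs, Set.mem_union, Set.mem_setOf_eq, Sym2.mem_iff, Finset.mem_union]
      constructor
      · rintro (⟨he, h⟩ | ⟨he, h⟩)
        · exact ⟨he, fun w hw => Or.inl (h w hw)⟩
        · refine ⟨he, fun w hw => ?_⟩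
          rcases h w hw with hw' | hw'
          · exact Or.inl (hAC hw')
          · exact Or.inr hw'
      · rintro ⟨he, h⟩
        have hadj : G.Adj u v := he
        by_cases hu : u ∈ Y
        · right
          refine ⟨he, fun w hw => ?_⟩
          rcases hw with rfl | rfl
          · exact Or.inr hu
          · rcases h w (Or.inr rfl) with hwC | hwY
            · by_cases hwA : w ∈ A
              · exact Or.inl hwA
              · exact absurd hadj (hfree u hu w (Finset.mem_sdiff.mpr ⟨hwC, hwA⟩))
            · exact Or.inr hwY
        · by_cases hv : v ∈ Y
          · right
            refine ⟨he, fun w hw => ?_⟩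
            rcases hw with rfl | rfl
            · rcases h w (Or.inl rfl) with hwC | hwY
              · by_cases hwA : w ∈ A
                · exact Or.inl hwA
                · exact absurd hadj.symm
                    (hfree v hv w (Finset.mem_sdiff.mpr ⟨hwC, hwA⟩))
              · exact Or.inr hwY
            · exact Or.inr hv
          · left
            refine ⟨he, fun w hw => ?_⟩
            rcases hw with rfl | rfl
            · rcases h w (Or.inl rfl) with hwC | hwY
              · exact hwC
              · exact absurd hwY hu
            · rcases h w (Or.inr rfl) with hwC | hwY
              · exact hwC
              · exact absurd hwY hv
  have hInter : Es C ∩ Es (A ∪ Y) = Es A := by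
    ext e
    simp only [hEs, Set.mem_inter_iff, Set.mem_setOf_eq, Finset.mem_union]
    constructor
    · rintro ⟨⟨he, hC'⟩, ⟨_, hAY⟩⟩
      refine ⟨he, fun w hw => ?_⟩
      rcases hAY w hw with hwA | hwY
      · exact hwA
      · exact absurd (hC' w hw) (Finset.disjoint_left.mp hYC hwY)
    · rintro ⟨he, h⟩
      exact ⟨⟨he, fun w hw => hAC (h w hw)⟩, ⟨he, fun w hw => Or.inl (h w hw)⟩⟩
  have hkey : eCount G (C ∪ Y) + eCount G A = eCount G C + eCount G (A ∪ Y) := by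
    have := Set.ncard_union_add_ncard_inter (Es C) (Es (A ∪ Y))
      (eSet_finite G C) (eSet_finite G (A ∪ Y))
    rw [hUnion, hInter] at this
    exact this
  have he : (eCount G (C ∪ Y) : ℚ) + eCount G A = eCount G C + eCount G (A ∪ Y) := by
    exact_mod_cast hkey
  unfold pdimQ
  linear_combination hc - r * he

/-- Full amalgamation for the relation `≼*`. -/
theorem strongStar_full_amalgam {V : Type*} [DecidableEq V]
    (G : SimpleGraph V) (S : V → V → Prop) (hS : Equivalence S)
    (N : ℕ) (hN : 1 < N) (p q : ℕ) (hp : 0 < p) (hq : 0 < q)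
    (hpq : Nat.Coprime p q) (r : ℚ) (hr : r = (p : ℚ) / q)
    (hr0 : 0 < r) (hr1 : r < 1)
    (A B C : Finset V) (hBC : B ∩ C = A) (hAC : A ⊆ C)
    (hfree : ∀ u ∈ B \ A, ∀ v ∈ C \ A, ¬ G.Adj u v)
    (hSfree : ∀ u ∈ B \ A, ∀ v ∈ C \ A, ¬ S u v)
    (hA : Admissible G S r q N A) (hB : Admissible G S r q N B)
    (hC : Admissible G S r q N C)
    (hAB : StrongStar G S r A B) :
    StrongStar G S r C (B ∪ C) := by
  have hAB' : A ⊆ B := hBC ▸ Finset.inter_subset_left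
  have hBA_C : ∀ v ∈ B, v ∉ C → v ∈ B \ A := by
    intro v hvB hvC
    exact Finset.mem_sdiff.mpr ⟨hvB, fun hvA => hvC (hAC hvA)⟩
  constructor
  · -- homogeneous sets
    intro X hX hXhom
    by_cases h : ∃ u ∈ X, u ∈ B \ A
    · obtain ⟨u, huX, huBA⟩ := h
      have hXB : X ⊆ B := by
        intro v hvX
        rcases Finset.mem_union.mp (hX hvX) with hvB | hvC
        · exact hvB
        · by_cases hvA : v ∈ A
          · exact hAB' hvA
          · exact absurd (hXhom u huX v hvX)
              (hSfree u huBA v (Finset.mem_sdiff.mpr ⟨hvC, hvA⟩))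
      rcases hAB.1 X hXB hXhom with hXA | hXBA
      · exact Or.inl (hXA.trans hAC)
      · refine Or.inr fun v hvX => ?_
        have hv := Finset.mem_sdiff.mp (hXBA hvX)
        refine Finset.mem_sdiff.mpr ⟨Finset.mem_union_left _ hv.1, fun hvC => ?_⟩
        exact hv.2 (hBC ▸ Finset.mem_inter.mpr ⟨hv.1, hvC⟩)
    · refine Or.inl fun v hvX => ?_
      rcases Finset.mem_union.mp (hX hvX) with hvB | hvC
      · by_contra hvC
        exact h ⟨v, hvX, hBA_C v hvB hvC⟩
      · exact hvC
  · refine ⟨Finset.subset_union_right, ?_⟩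
    intro D₀ hCD₀ hD₀BC
    set Y := D₀ \ C with hY
    have hYBA : Y ⊆ B \ A := by
      intro v hv
      have hv' := Finset.mem_sdiff.mp hv
      rcases Finset.mem_union.mp (hD₀BC hv'.1) with hvB | hvC
      · exact hBA_C v hvB hv'.2
      · exact absurd hvC hv'.2
    have hYne : Y.Nonempty := by
      obtain ⟨v, hvD, hvC⟩ := Finset.exists_of_ssubset hCD₀
      exact ⟨v, Finset.mem_sdiff.mpr ⟨hvD, hvC⟩⟩
    have hYC : Disjoint Y C := Finset.sdiff_disjoint
    have hD₀eq : C ∪ Y = D₀ := Finset.union_sdiff_of_subset hCD₀.subset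
    have hid := pdim_amalgam G r A C Y hAC hYC
      (fun u hu v hv => hfree u (hYBA hu) v hv)
    rw [hD₀eq] at hid
    obtain ⟨y, hy⟩ := hYne
    have hssub : A ⊂ A ∪ Y := by
      refine Finset.ssubset_iff_of_subset Finset.subset_union_left |>.mpr
        ⟨y, Finset.mem_union_right _ hy, ?_⟩
      exact (Finset.mem_sdiff.mp (hYBA hy)).2
    have hsubB : A ∪ Y ⊆ B :=
      Finset.union_subset hAB' (fun v hv => (Finset.mem_sdiff.mp (hYBA hv)).1)
    have hlt := hAB.2.2 (A ∪ Y) hssub hsubB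
    linarith
end

section
/- Characterization of strong substructure in acyclic graphs: let G be an acyclic simple graph and let A ⊆ B be finite sets of vertices of G. Then δ_1(B₀) > δ_1(A) holds for every B₀ with A ⊊ B₀ ⊆ B if and only if no edge of G has one endpoint in A and the other endpoint in B \ A. -/
section Aux

open SimpleGraph Walk
variable {V : Type*} [DecidableEq V] {G : SimpleGraph V}

set_option linter.unusedSectionVars false

lemma path_length_eq_dist (hG : G.IsAcyclic) {u v : V}
    {p : G.Walk u v} (hp : p.IsPath) : p.length = G.dist u v := by
  obtain ⟨q, hq, hlen⟩ := Reachable.exists_path_of_dist ⟨p⟩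
  have h := hG.path_unique ⟨p, hp⟩ ⟨q, hq⟩
  rw [← hlen]
  exact congrArg Walk.length (congrArg Subtype.val h)

lemma concat_isPath {u v w : V} {p : G.Walk u v} (hp : p.IsPath) (h : G.Adj v w)
    (hw : w ∉ p.support) : (p.concat h).IsPath := by
  rw [← isPath_reverse_iff, reverse_concat]
  exact (cons_isPath_iff _ _).2 ⟨hp.reverse, by simpa using hw⟩

lemma not_mem_support_of_dist_lt (hG : G.IsAcyclic) {r a x : V}
    {p : G.Walk r a} (hp : p.IsPath) (hpl : p.length = G.dist r a)
    (hd : G.dist r a < G.dist r x) : x ∉ p.support := by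
  intro hx
  have h1 : (p.takeUntil x hx).length = G.dist r x :=
    path_length_eq_dist hG (hp.takeUntil hx)
  have h2 := Walk.length_takeUntil_le p hx
  omega

lemma lower_neighbor_unique (hG : G.IsAcyclic) {r x a b : V}
    (hr : G.Reachable r x) (ha : G.Adj a x) (hb : G.Adj b x)
    (hda : G.dist r a < G.dist r x) (hdb : G.dist r b < G.dist r x) : a = b := by
  obtain ⟨p, hp, hpl⟩ := (hr.trans ha.symm.reachable).exists_path_of_dist
  obtain ⟨q, hq, hql⟩ := (hr.trans hb.symm.reachable).exists_path_of_dist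
  have hxp := not_mem_support_of_dist_lt hG hp hpl hda
  have hxq := not_mem_support_of_dist_lt hG hq hql hdb
  have h := hG.path_unique ⟨p.concat ha, concat_isPath hp ha hxp⟩
    ⟨q.concat hb, concat_isPath hq hb hxq⟩
  obtain ⟨hv, -⟩ := Walk.concat_inj (congrArg Subtype.val h)
  exact hv

lemma dist_ne_of_adj (hG : G.IsAcyclic) {r a x : V} (hax : G.Adj a x)
    (hr : G.Reachable r x) : G.dist r a ≠ G.dist r x := by
  intro hd
  obtain ⟨p, hp, hpl⟩ := (hr.trans hax.symm.reachable).exists_path_of_dist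
  by_cases hx : x ∈ p.support
  · have h1 : (p.takeUntil x hx).length = G.dist r x :=
      path_length_eq_dist hG (hp.takeUntil hx)
    have h2 : (p.takeUntil x hx).length + (p.dropUntil x hx).length = p.length := by
      rw [← Walk.length_append, Walk.take_spec]
    have h3 : (p.dropUntil x hx).length = 0 := by omega
    have h4 : x = a := Walk.eq_of_length_eq_zero h3
    exact hax.ne' (h4 ▸ rfl)
  · have h5 : (p.concat hax).length = G.dist r x :=
      path_length_eq_dist hG (concat_isPath hp hax hx)
    rw [Walk.length_concat] at h5
    omega

/-- root of the connected component of a vertex -/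
noncomputable def groot (G : SimpleGraph V) (x : V) : V := (G.connectedComponentMk x).out

lemma groot_reachable (G : SimpleGraph V) (x : V) : G.Reachable (groot G x) x := by
  rw [← SimpleGraph.ConnectedComponent.eq]
  exact (G.connectedComponentMk x).out_eq

lemma groot_eq_of_reachable {x y : V} (h : G.Reachable x y) : groot G x = groot G y := by
  unfold groot
  rw [SimpleGraph.ConnectedComponent.eq.mpr h]

lemma groot_idem (G : SimpleGraph V) (x : V) : groot G (groot G x) = groot G x :=
  groot_eq_of_reachable (groot_reachable G x)

open Classical in
/-- The endpoint of an edge farther from the root of its component. -/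
noncomputable def emax (G : SimpleGraph V) [Nonempty V] (e : Sym2 V) : V :=
  if h : ∃ x ∈ e, ∀ y ∈ e, G.dist (groot G y) y ≤ G.dist (groot G x) x then h.choose
  else Classical.arbitrary V

lemma emax_spec [Nonempty V] (hG : G.IsAcyclic) {e : Sym2 V} (he : e ∈ G.edgeSet) :
    ∃ w, e = s(emax G e, w) ∧ G.Adj w (emax G e) ∧
      G.dist (groot G (emax G e)) w < G.dist (groot G (emax G e)) (emax G e) := by
  induction e with
  | _ u v =>
    have hadj : G.Adj u v := he
    have hru : groot G u = groot G v := groot_eq_of_reachable hadj.reachable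
    have hne : G.dist (groot G v) u ≠ G.dist (groot G v) v :=
      dist_ne_of_adj hG hadj (groot_reachable G v)
    have hex : ∃ x ∈ (s(u,v) : Sym2 V), ∀ y ∈ (s(u,v) : Sym2 V),
        G.dist (groot G y) y ≤ G.dist (groot G x) x := by
      rcases lt_or_gt_of_ne hne with h | h
      · refine ⟨v, by simp, ?_⟩
        intro y hy
        rcases Sym2.mem_iff.mp hy with h1 | h1
        · rw [h1, hru]; exact h.le
        · rw [h1]
      · refine ⟨u, by simp, ?_⟩
        intro y hy
        rcases Sym2.mem_iff.mp hy with h1 | h1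
        · rw [h1]
        · rw [h1, hru]; exact h.le
    have hm : emax G s(u,v) = hex.choose := by
      unfold emax
      rw [dif_pos hex]
    have hmem : emax G s(u,v) ∈ (s(u,v) : Sym2 V) := by
      rw [hm]; exact hex.choose_spec.1
    have hmax : ∀ y ∈ (s(u,v) : Sym2 V),
        G.dist (groot G y) y ≤ G.dist (groot G (emax G s(u,v))) (emax G s(u,v)) := by
      rw [hm]; exact hex.choose_spec.2
    rcases Sym2.mem_iff.mp hmem with hmu | hmv
    · refine ⟨v, by rw [hmu], by rw [hmu]; exact hadj.symm, ?_⟩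
      have h2 := hmax v (by simp)
      rw [hmu, hru] at h2 ⊢
      exact lt_of_le_of_ne h2 (Ne.symm hne)
    · refine ⟨u, by rw [hmv, Sym2.eq_swap], by rw [hmv]; exact hadj, ?_⟩
      have h2 := hmax u (by simp)
      rw [hmv] at h2 ⊢
      rw [hru] at h2
      exact lt_of_le_of_ne h2 hne

lemma acyclic_ncard_edgeSet [Fintype V] [Nonempty V] (hG : G.IsAcyclic) :
    G.edgeSet.ncard + 1 ≤ Fintype.card V := by
  classical
  have hinj : Set.InjOn (emax G) G.edgeSet := by
    intro e1 h1 e2 h2 hee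
    obtain ⟨w1, he1, ha1, hd1⟩ := emax_spec hG h1
    obtain ⟨w2, he2, ha2, hd2⟩ := emax_spec hG h2
    rw [hee] at ha1 hd1
    have hw : w1 = w2 := lower_neighbor_unique hG (groot_reachable G _) ha1 ha2 hd1 hd2
    rw [he1, he2, hw, hee]
  have hsub : (emax G) '' G.edgeSet ⊆ {x | x ≠ groot G x} := by
    rintro _ ⟨e, he, rfl⟩
    obtain ⟨w, -, -, hd⟩ := emax_spec hG he
    intro hroot
    rw [← hroot] at hd
    simp [SimpleGraph.dist_self] at hd
  have h1 : G.edgeSet.ncard = ((emax G) '' G.edgeSet).ncard :=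
    (Set.ncard_image_of_injOn hinj).symm
  have h2 : ((emax G) '' G.edgeSet).ncard ≤ ({x | x ≠ groot G x} : Set V).ncard :=
    Set.ncard_le_ncard hsub (Set.toFinite _)
  have h3 : ({x | x ≠ groot G x} : Set V).ncard + 1 ≤ Fintype.card V := by
    obtain ⟨x⟩ := ‹Nonempty V›
    set x0 := groot G x with hx0def
    have hx0 : x0 = groot G x0 := (groot_idem G x).symm
    have hss : ({x | x ≠ groot G x} : Set V) ⊆ {x0}ᶜ := by
      intro y hy hmem
      simp only [Set.mem_compl_iff, Set.mem_singleton_iff] at hmem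
      exact hy (hmem ▸ hx0)
    have h6 : ({x | x ≠ groot G x} : Set V).ncard ≤ ({x0}ᶜ : Set V).ncard :=
      Set.ncard_le_ncard hss (Set.toFinite _)
    have h4 := Set.ncard_add_ncard_compl ({x0} : Set V) (Set.toFinite _)
    rw [Set.ncard_singleton] at h4
    have h5 : Nat.card V = Fintype.card V := Nat.card_eq_fintype_card
    omega
  omega

lemma isAcyclic_induce (hG : G.IsAcyclic) (s : Set V) : (G.induce s).IsAcyclic := by
  intro v c hc
  exact hG (c.map (SimpleGraph.Embedding.induce (G := G) s).toHom)
    (hc.map (SimpleGraph.Embedding.induce (G := G) s).injective)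

lemma edgeSet_within_eq (G : SimpleGraph V) (s : Finset V) :
    ({e : Sym2 V | e ∈ G.edgeSet ∧ ∀ v ∈ e, v ∈ s} : Set (Sym2 V)) =
      Sym2.map (Subtype.val) '' (G.induce (↑s : Set V)).edgeSet := by
  ext e
  constructor
  · rintro ⟨he, hmem⟩
    induction e with
    | _ u v =>
      have hu : u ∈ s := hmem u (by simp)
      have hv : v ∈ s := hmem v (by simp)
      refine ⟨s(⟨u, hu⟩, ⟨v, hv⟩), ?_, by simp⟩
      simpa using he
  · rintro ⟨e', he', rfl⟩
    induction e' with
    | _ u v =>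
      have : G.Adj u.1 v.1 := he'
      refine ⟨this, ?_⟩
      intro w hw
      simp only [Sym2.map_pair_eq, Sym2.mem_iff] at hw
      rcases hw with rfl | rfl
      · exact u.2
      · exact v.2


lemma setWithin_finite (G : SimpleGraph V) (s : Finset V) :
    ({e : Sym2 V | e ∈ G.edgeSet ∧ ∀ v ∈ e, v ∈ s} : Set (Sym2 V)).Finite := by
  rw [edgeSet_within_eq]
  exact (Set.toFinite _).image _

lemma eCount_eq_ncard (G : SimpleGraph V) (s : Finset V) :
    eCount G s = (G.induce (↑s : Set V)).edgeSet.ncard := by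
  unfold eCount
  rw [edgeSet_within_eq]
  exact Set.ncard_image_of_injective _ (Sym2.map.injective Subtype.val_injective)

lemma eCount_bound (hG : G.IsAcyclic) (s : Finset V) (hs : s.Nonempty) :
    eCount G s + 1 ≤ s.card := by
  rw [eCount_eq_ncard]
  have : Nonempty ↥(↑s : Set V) := ⟨⟨hs.choose, hs.choose_spec⟩⟩
  have h := acyclic_ncard_edgeSet (isAcyclic_induce hG (↑s : Set V))
  simpa using h


end Aux

/-- Characterization of strong substructure in acyclic graphs. -/
theorem acyclic_strong_iff_no_cross_edge {V : Type*} [DecidableEq V]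
    (G : SimpleGraph V) (hG : G.IsAcyclic) (A B : Finset V) (hAB : A ⊆ B) :
    (∀ B₀ : Finset V, A ⊂ B₀ → B₀ ⊆ B → pdim G 1 A < pdim G 1 B₀) ↔
      ¬ ∃ u v, G.Adj u v ∧ u ∈ A ∧ v ∈ B \ A := by
  simp only [pdim]
  constructor
  · intro h
    rintro ⟨u, v, huv, hu, hv⟩
    rw [Finset.mem_sdiff] at hv
    obtain ⟨hvB, hvA⟩ := hv
    have hss : A ⊂ insert v A := Finset.ssubset_insert hvA
    have hBsub : insert v A ⊆ B := Finset.insert_subset hvB hAB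
    have hlt := h (insert v A) hss hBsub
    have hcard : (insert v A).card = A.card + 1 := Finset.card_insert_of_notMem hvA
    -- eCount A < eCount (insert v A)
    have hsetss : ({e : Sym2 V | e ∈ G.edgeSet ∧ ∀ w ∈ e, w ∈ A} : Set (Sym2 V)) ⊂
        {e : Sym2 V | e ∈ G.edgeSet ∧ ∀ w ∈ e, w ∈ insert v A} := by
      constructor
      · rintro e ⟨he, hm⟩
        exact ⟨he, fun w hw => Finset.mem_insert_of_mem (hm w hw)⟩
      · intro hsub
        have hmem : s(u,v) ∈ ({e : Sym2 V | e ∈ G.edgeSet ∧ ∀ w ∈ e, w ∈ insert v A} :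
            Set (Sym2 V)) := by
          refine ⟨huv, ?_⟩
          intro w hw
          rcases Sym2.mem_iff.mp hw with rfl | rfl
          · exact Finset.mem_insert_of_mem hu
          · exact Finset.mem_insert_self _ _
        obtain ⟨-, hm⟩ := hsub hmem
        exact hvA (hm v (by simp))
    have hE : eCount G A < eCount G (insert v A) :=
      Set.ncard_lt_ncard hsetss (setWithin_finite G _)
    rw [hcard] at hlt
    push_cast at hlt
    have : (eCount G (insert v A) : ℝ) < (eCount G A : ℝ) + 1 := by linarith
    exact_mod_cast absurd (by exact_mod_cast this) (by omega)
  · intro hno B₀ hss hB₀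
    set D := B₀ \ A with hD
    have hDne : D.Nonempty := by
      obtain ⟨x, hxB, hxA⟩ := Finset.exists_of_ssubset hss
      exact ⟨x, Finset.mem_sdiff.mpr ⟨hxB, hxA⟩⟩
    have hDcard : D.card = B₀.card - A.card := Finset.card_sdiff_of_subset hss.subset
    have hAcard : A.card < B₀.card := Finset.card_lt_card hss
    -- split edges
    have hsplit : ({e : Sym2 V | e ∈ G.edgeSet ∧ ∀ w ∈ e, w ∈ B₀} : Set (Sym2 V)) ⊆
        {e : Sym2 V | e ∈ G.edgeSet ∧ ∀ w ∈ e, w ∈ A} ∪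
        {e : Sym2 V | e ∈ G.edgeSet ∧ ∀ w ∈ e, w ∈ D} := by
      rintro e ⟨he, hm⟩
      induction e with
      | _ x y =>
        have hx : x ∈ B₀ := hm x (by simp)
        have hy : y ∈ B₀ := hm y (by simp)
        have hadj : G.Adj x y := he
        by_cases hxA : x ∈ A <;> by_cases hyA : y ∈ A
        · left
          refine ⟨he, ?_⟩
          intro w hw
          rcases Sym2.mem_iff.mp hw with rfl | rfl
          · exact hxA
          · exact hyA
        · exact absurd ⟨x, y, hadj, hxA, Finset.mem_sdiff.mpr ⟨hB₀ hy, hyA⟩⟩ hno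
        · exact absurd ⟨y, x, hadj.symm, hyA, Finset.mem_sdiff.mpr ⟨hB₀ hx, hxA⟩⟩ hno
        · right
          refine ⟨he, ?_⟩
          intro w hw
          rcases Sym2.mem_iff.mp hw with rfl | rfl
          · exact Finset.mem_sdiff.mpr ⟨hx, hxA⟩
          · exact Finset.mem_sdiff.mpr ⟨hy, hyA⟩
    have h1 : eCount G B₀ ≤ eCount G A + eCount G D := by
      calc eCount G B₀ ≤ ({e : Sym2 V | e ∈ G.edgeSet ∧ ∀ w ∈ e, w ∈ A} ∪
            {e : Sym2 V | e ∈ G.edgeSet ∧ ∀ w ∈ e, w ∈ D} : Set (Sym2 V)).ncard :=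
          Set.ncard_le_ncard hsplit ((setWithin_finite G A).union (setWithin_finite G D))
        _ ≤ eCount G A + eCount G D := Set.ncard_union_le _ _
    have h2 : eCount G D + 1 ≤ D.card := eCount_bound hG D hDne
    have key : eCount G B₀ + A.card + 1 ≤ eCount G A + B₀.card := by omega
    have := Nat.cast_le (α := ℝ) |>.mpr key
    push_cast at this
    linarith
end
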